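/- Let e, f₁, …, f_m, g₁, …, g_n be Milner expressions and let v̄ = (v_{i₁}, …, v_{i_m}) and w̄ = (v_{j₁}, …, v_{j_n}) be vectors of distinct variables such that all free variables of e are contained in v̄ and all free variables of each f_k are contained in w̄. Then (e[f̄/v̄])[ḡ/w̄] is bisimilar to e[(f₁[ḡ/w̄], …, f_m[ḡ/w̄])/v̄]. -/
import Mathlib


open Classical in
/-- The lifting `d↑` of a distance function on `X` to `Σ × X + V`. -/
noncomputable def distLift {A V X : Type*} (d : X → X → ℝ) :
    ((A × X) ⊕ V) → ((A × X) ⊕ V) → ℝ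
  | Sum.inl (a, x), Sum.inl (b, y) => if a = b then (1 / 2) * d x y else 1
  | Sum.inr v, Sum.inr w => if v = w then 0 else 1
  | _, _ => 1

/-- Supremum of `f` over a finite set, with the convention `sup ∅ = 0`. -/
noncomputable def hSup {Y : Type*} (s : Finset Y) (f : Y → ℝ) : ℝ :=
  if h : s.Nonempty then s.sup' h f else 0

/-- Infimum of `f` over a finite set, with the convention `inf ∅ = 1`. -/
noncomputable def hInf {Y : Type*} (s : Finset Y) (f : Y → ℝ) : ℝ :=
  if h : s.Nonempty then s.inf' h f else 1

/-- Hausdorff lifting of a distance function to finite subsets. -/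
noncomputable def hausdorffDist {X : Type*} (d : X → X → ℝ) (s t : Finset X) : ℝ :=
  max (hSup s fun x => hInf t fun y => d x y) (hSup t fun y => hInf s fun x => d y x)

/-- The map `Φ_β` associated with a prechart `(Q, β)`. -/
noncomputable def Phi {A V Q : Type*} (β : Q → Finset ((A × Q) ⊕ V))
    (d : Q → Q → ℝ) : Q → Q → ℝ :=
  fun q₁ q₂ => hausdorffDist (distLift d) (β q₁) (β q₂)

/-- `d` is a 1-bounded pseudometric on `X`. -/
structure IsBPMet {X : Type*} (d : X → X → ℝ) : Prop where
  nonneg : ∀ x y, 0 ≤ d x y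
  le_one : ∀ x y, d x y ≤ 1
  refl : ∀ x, d x x = 0
  symm : ∀ x y, d x y = d y x
  triangle : ∀ x y z, d x z ≤ d x y + d y z

/-- A bisimulation between two precharts. -/
def IsBisim {A V Q₁ Q₂ : Type*} (β₁ : Q₁ → Finset ((A × Q₁) ⊕ V))
    (β₂ : Q₂ → Finset ((A × Q₂) ⊕ V)) (R : Q₁ → Q₂ → Prop) : Prop :=
  ∀ q₁ q₂, R q₁ q₂ →
    (∀ v : V, Sum.inr v ∈ β₁ q₁ ↔ Sum.inr v ∈ β₂ q₂) ∧
    (∀ (a : A) (q₁' : Q₁), Sum.inl (a, q₁') ∈ β₁ q₁ →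
      ∃ q₂', Sum.inl (a, q₂') ∈ β₂ q₂ ∧ R q₁' q₂') ∧
    (∀ (a : A) (q₂' : Q₂), Sum.inl (a, q₂') ∈ β₂ q₂ →
      ∃ q₁', Sum.inl (a, q₁') ∈ β₁ q₁ ∧ R q₁' q₂')

/-- Bisimilarity of two states of a prechart. -/
def Bisimilar {A V Q : Type*} (β : Q → Finset ((A × Q) ⊕ V)) (q₁ q₂ : Q) : Prop :=
  ∃ R, IsBisim β β R ∧ R q₁ q₂

/-- A prechart homomorphism: a function whose graph is a bisimulation. -/
def IsHom {A V Q₁ Q₂ : Type*} (β₁ : Q₁ → Finset ((A × Q₁) ⊕ V))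
    (β₂ : Q₂ → Finset ((A × Q₂) ⊕ V)) (f : Q₁ → Q₂) : Prop :=
  IsBisim β₁ β₂ fun q₁ q₂ => q₂ = f q₁

/-- Stratification of bisimilarity between two precharts. -/
def Strat2 {A V Q₁ Q₂ : Type*} (β₁ : Q₁ → Finset ((A × Q₁) ⊕ V))
    (β₂ : Q₂ → Finset ((A × Q₂) ⊕ V)) : ℕ → Q₁ → Q₂ → Prop
  | 0 => fun _ _ => True
  | n + 1 => fun q₁ q₂ =>
      (∀ v : V, Sum.inr v ∈ β₁ q₁ ↔ Sum.inr v ∈ β₂ q₂) ∧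
      (∀ (a : A) (q₁' : Q₁), Sum.inl (a, q₁') ∈ β₁ q₁ →
        ∃ q₂', Sum.inl (a, q₂') ∈ β₂ q₂ ∧ Strat2 β₁ β₂ n q₁' q₂') ∧
      (∀ (a : A) (q₂' : Q₂), Sum.inl (a, q₂') ∈ β₂ q₂ →
        ∃ q₁', Sum.inl (a, q₁') ∈ β₁ q₁ ∧ Strat2 β₁ β₂ n q₁' q₂')

/-- Stratification of bisimilarity on a single prechart. -/
def Strat {A V Q : Type*} (β : Q → Finset ((A × Q) ⊕ V)) : ℕ → Q → Q → Prop :=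
  Strat2 β β

/-- One-step transition relation of a prechart. -/
def StepRel {A V Q : Type*} (β : Q → Finset ((A × Q) ⊕ V)) (q q' : Q) : Prop :=
  ∃ a : A, Sum.inl (a, q') ∈ β q

/-- A prechart is locally finite if every state reaches only finitely many states. -/
def LocFinite {A V Q : Type*} (β : Q → Finset ((A × Q) ⊕ V)) : Prop :=
  ∀ q : Q, {q' | Relation.ReflTransGen (StepRel β) q q'}.Finite

/-- `bd` is the least fixpoint of `Φ_β` in the lattice of 1-bounded pseudometrics. -/
def IsLfpDist {A V Q : Type*} (β : Q → Finset ((A × Q) ⊕ V)) (bd : Q → Q → ℝ) : Prop :=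
  IsBPMet bd ∧ Phi β bd = bd ∧
    ∀ d : Q → Q → ℝ, IsBPMet d → Phi β d = d → ∀ x y, bd x y ≤ d x y

open Classical in
/-- The discrete pseudometric, the top element of `D_X`. -/
noncomputable def discreteDist {X : Type*} : X → X → ℝ :=
  fun x y => if x = y then 0 else 1

/-- Iterates `Φ_β^{(p)}` of `Φ_β` starting from the discrete pseudometric. -/
noncomputable def PhiIter {A V Q : Type*} (β : Q → Finset ((A × Q) ⊕ V)) :
    ℕ → Q → Q → ℝ
  | 0 => discreteDist
  | n + 1 => Phi β (PhiIter β n)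


/-- Milner expressions over an alphabet `A`, with variables drawn from `ℕ`
(a countably infinite set of variables). -/
inductive Exp (A : Type*) : Type _ where
  | zero : Exp A
  | var : ℕ → Exp A
  | act : A → Exp A → Exp A
  | plus : Exp A → Exp A → Exp A
  | mu : ℕ → Exp A → Exp A
deriving DecidableEq

namespace Exp

/-- Free variables of an expression. -/
def fv {A : Type*} : Exp A → Finset ℕ
  | .zero => ∅
  | .var v => {v}
  | .act _ e => fv e
  | .plus e f => fv e ∪ fv f
  | .mu v e => (fv e).erase v

/-- A fresh variable not belonging to the given finite set. -/
def freshVar (s : Finset ℕ) : ℕ := s.sup id + 1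

/-- Simultaneous capture-avoiding substitution: `subst σ e` substitutes `σ w` for every
free occurrence of each variable `w` in `e`, renaming the bound variable of a
`μ`-binder whenever it would capture a free variable of a substituted expression. -/
def subst {A : Type*} : (ℕ → Exp A) → Exp A → Exp A
  | _, .zero => .zero
  | σ, .var v => σ v
  | σ, .act a e => .act a (subst σ e)
  | σ, .plus e f => .plus (subst σ e) (subst σ f)
  | σ, .mu v e =>
      let S : Finset ℕ := ((fv e).erase v).biUnion fun w => fv (σ w)
      let v' : ℕ := if v ∈ S then freshVar S else v
      .mu v' (subst (Function.update σ v (.var v')) e)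

/-- Substitution of a single expression `t` for the variable `v`. -/
def subst1 {A : Type*} (e : Exp A) (v : ℕ) (t : Exp A) : Exp A :=
  subst (Function.update Exp.var v t) e
end Exp

section Dest
variable {A : Type*} [DecidableEq A]

/-- Successors contributed by one transition/output of the body of `μv.e`,
where `me = μv.e`. -/
def destStep (v : ℕ) (me : Exp A) : ((A × Exp A) ⊕ ℕ) → Finset ((A × Exp A) ⊕ ℕ)
  | Sum.inl (a, e') => {Sum.inl (a, Exp.subst1 e' v me)}
  | Sum.inr w => if w = v then ∅ else {Sum.inr w}

/-- The prechart structure on Milner expressions, given by the operational rules: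
`a.e →a e`; `v ▷ v`; `e + f` inherits the transitions and outputs of `e` and `f`;
`μw.e ▷ v` when `e ▷ v` and `v ≠ w`; `μv.e →a e'[μv.e/v]` whenever `e →a e'`. -/
def dest : Exp A → Finset ((A × Exp A) ⊕ ℕ)
  | .zero => ∅
  | .var v => {Sum.inr v}
  | .act a e => {Sum.inl (a, e)}
  | .plus e f => dest e ∪ dest f
  | .mu v e => (dest e).biUnion (destStep v (.mu v e))

end Dest


namespace SubstComp

/-- Locally nameless Milner terms: bound variables as de Bruijn indices,
free variables as names. -/
inductive LN (A : Type*) : Type _ where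
  | zero : LN A
  | bvar : ℕ → LN A
  | fvar : ℕ → LN A
  | act : A → LN A → LN A
  | plus : LN A → LN A → LN A
  | mu : LN A → LN A
deriving DecidableEq

variable {A : Type*}

/-- Shift dangling indices `≥ c` up by `k`. -/
def lift (c k : ℕ) : LN A → LN A
  | .zero => .zero
  | .bvar j => if j < c then .bvar j else .bvar (j + k)
  | .fvar v => .fvar v
  | .act a t => .act a (lift c k t)
  | .plus s t => .plus (lift c k s) (lift c k t)
  | .mu t => .mu (lift (c + 1) k t)

/-- Substitute `u` for index `k`, decrementing higher indices. -/
def inst (k : ℕ) (u : LN A) : LN A → LN A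
  | .zero => .zero
  | .bvar j => if j < k then .bvar j else if j = k then lift 0 k u else .bvar (j - 1)
  | .fvar v => .fvar v
  | .act a t => .act a (inst k u t)
  | .plus s t => .plus (inst k u s) (inst k u t)
  | .mu t => .mu (inst (k + 1) u t)

/-- Interpret a named expression in an environment `ρ`. -/
def interp (ρ : ℕ → LN A) : Exp A → LN A
  | .zero => .zero
  | .var v => ρ v
  | .act a e => .act a (interp ρ e)
  | .plus e f => .plus (interp ρ e) (interp ρ f)
  | .mu v e => .mu (interp (Function.update (fun w => lift 0 1 (ρ w)) v (.bvar 0)) e)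

section destLN
variable [DecidableEq A]

def destStepL (me : LN A) : ((A × LN A) ⊕ ℕ) → Finset ((A × LN A) ⊕ ℕ)
  | Sum.inl (a, t') => {Sum.inl (a, inst 0 me t')}
  | Sum.inr w => {Sum.inr w}

def destL : LN A → Finset ((A × LN A) ⊕ ℕ)
  | .zero => ∅
  | .bvar _ => ∅
  | .fvar v => {Sum.inr v}
  | .act a t => {Sum.inl (a, t)}
  | .plus s t => destL s ∪ destL t
  | .mu t => (destL t).biUnion (destStepL (.mu t))

end destLN

/-! ### de Bruijn lemmas -/

theorem lift_zero (c : ℕ) (t : LN A) : lift c 0 t = t := by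
  induction t generalizing c <;> simp [lift, *]

theorem lift_lift_merge (j k : ℕ) (t : LN A) : ∀ b c, b ≤ c → c ≤ b + k →
    lift c j (lift b k t) = lift b (k + j) t := by
  induction t with
  | zero => intros; rfl
  | fvar v => intros; rfl
  | bvar i =>
    intro b c h1 h2
    by_cases hib : i < b
    · have : i < c := by omega
      simp [lift, hib, this]
    · have : ¬ i + k < c := by omega
      simp [lift, hib, this]; omega
  | act a t ih =>
    intro b c h1 h2; simp only [lift]; rw [ih b c h1 h2]
  | plus s t ihs iht =>
    intro b c h1 h2; simp only [lift]; rw [ihs b c h1 h2, iht b c h1 h2]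
  | mu t ih =>
    intro b c h1 h2; simp only [lift]; rw [ih (b + 1) (c + 1) (by omega) (by omega)]

theorem lift_lift_comm (j k : ℕ) (t : LN A) : ∀ b c, b ≤ c →
    lift b j (lift c k t) = lift (c + j) k (lift b j t) := by
  induction t with
  | zero => intros; rfl
  | fvar v => intros; rfl
  | bvar i =>
    intro b c h
    rcases lt_or_ge i b with hib | hib
    · have h1 : i < c := by omega
      have h2 : i < c + j := by omega
      simp [lift, hib, h1, h2]
    · rcases lt_or_ge i c with hic | hic
      · have h1 : ¬ i < b := by omega
        have h2 : i + j < c + j := by omega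
        simp [lift, hic, h1, h2]
      · have h1 : ¬ i < b := by omega
        have h2 : ¬ i < c := by omega
        have h3 : ¬ i + k < b := by omega
        have h4 : ¬ i + j < c + j := by omega
        simp [lift, h1, h2, h3, h4]; omega
  | act a t ih =>
    intro b c h; simp only [lift]; rw [ih b c h]
  | plus s t ihs iht =>
    intro b c h; simp only [lift]; rw [ihs b c h, iht b c h]
  | mu t ih =>
    intro b c h
    simp only [lift]
    rw [ih (b + 1) (c + 1) (by omega), Nat.add_right_comm c 1 j]

theorem inst_lift (u : LN A) (t : LN A) : ∀ c k, c ≤ k →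
    inst (k + 1) u (lift c 1 t) = lift c 1 (inst k u t) := by
  induction t with
  | zero => intros; rfl
  | fvar v => intros; rfl
  | bvar i =>
    intro c k h
    rcases lt_or_ge i c with hic | hic
    · have h1 : i < k := by omega
      have h2 : i < k + 1 := by omega
      simp [lift, inst, hic, h1, h2]
    · rcases lt_trichotomy i k with hik | hik | hik
      · have h1 : i + 1 < k + 1 := by omega
        have h2 : ¬ i + 1 < c := by omega
        have h3 : ¬ i < c := by omega
        simp [lift, inst, hik, h1, h2, h3, hic]
      · have h1 : ¬ i + 1 < k + 1 := by omega
        have h2 : ¬ i < k := by omega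
        have h3 : ¬ i < c := by omega
        have h4 : i + 1 = k + 1 := by omega
        have h5 : i = k := hik
        simp only [lift, inst, if_neg h3, if_neg h1, if_pos h4, if_neg h2, if_pos h5]
        rw [lift_lift_merge 1 k u 0 c (by omega) (by omega)]
      · have h1 : ¬ i + 1 < k + 1 := by omega
        have h2 : ¬ i + 1 = k + 1 := by omega
        have h3 : ¬ i < k := by omega
        have h4 : ¬ i = k := by omega
        have h5 : ¬ i - 1 < c := by omega
        have h6 : ¬ i < c := by omega
        simp only [lift, inst, if_neg h6, if_neg h1, if_neg h2, if_neg h3, if_neg h4,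
          if_neg h5]
        congr 1
        omega
  | act a t ih =>
    intro c k h; simp only [lift, inst]; rw [ih c k h]
  | plus s t ihs iht =>
    intro c k h; simp only [lift, inst]; rw [ihs c k h, iht c k h]
  | mu t ih =>
    intro c k h
    simp only [lift, inst]
    rw [ih (c + 1) (k + 1) (by omega)]

theorem inst_lift_cancel (u : LN A) (t : LN A) : ∀ c, inst c u (lift c 1 t) = t := by
  induction t with
  | zero => intros; rfl
  | fvar v => intros; rfl
  | bvar i =>
    intro c
    by_cases hic : i < c
    · simp [lift, inst, hic]
    · have h1 : ¬ i + 1 < c := by omega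
      have h2 : ¬ i + 1 = c := by omega
      simp [lift, inst, hic, h1, h2]
  | act a t ih => intro c; simp only [lift, inst]; rw [ih c]
  | plus s t ihs iht => intro c; simp only [lift, inst]; rw [ihs c, iht c]
  | mu t ih => intro c; simp only [lift, inst]; rw [ih (c + 1)]

/-! ### interp lemmas -/

theorem interp_congr (ρ ρ' : ℕ → LN A) (e : Exp A)
    (h : ∀ w ∈ Exp.fv e, ρ w = ρ' w) : interp ρ e = interp ρ' e := by
  induction e generalizing ρ ρ' with
  | zero => rfl
  | var v => exact h v (by simp [Exp.fv])
  | act a e ih => simp only [interp]; rw [ih _ _ h]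
  | plus e f ihe ihf =>
    simp only [interp]
    rw [ihe _ _ fun w hw => h w (by simp [Exp.fv, hw]),
        ihf _ _ fun w hw => h w (by simp [Exp.fv, hw])]
  | mu v e ih =>
    simp only [interp]
    congr 1
    refine ih _ _ fun w hw => ?_
    by_cases hwv : w = v
    · subst hwv; simp
    · have : w ∈ Exp.fv (Exp.mu v e) := by simp [Exp.fv, hwv, hw]
      simp [Function.update_of_ne hwv, h w this]

theorem interp_lift (c k : ℕ) (ρ : ℕ → LN A) (e : Exp A) :
    interp (fun w => lift c k (ρ w)) e = lift c k (interp ρ e) := by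
  induction e generalizing c ρ with
  | zero => rfl
  | var v => rfl
  | act a e ih => simp only [interp, lift]; rw [ih]
  | plus e f ihe ihf => simp only [interp, lift]; rw [ihe, ihf]
  | mu v e ih =>
    simp only [interp, lift]
    congr 1
    rw [← ih (c + 1)]
    apply interp_congr
    intro w _
    by_cases hwv : w = v
    · subst hwv; simp [lift]
    · simp only [Function.update_of_ne hwv]
      exact lift_lift_comm 1 k (ρ w) 0 c (Nat.zero_le _)

theorem interp_inst (k : ℕ) (u : LN A) (ρ : ℕ → LN A) (e : Exp A) :
    inst k u (interp ρ e) = interp (fun w => inst k u (ρ w)) e := by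
  induction e generalizing k ρ with
  | zero => rfl
  | var v => rfl
  | act a e ih => simp only [interp, inst]; rw [ih]
  | plus e f ihe ihf => simp only [interp, inst]; rw [ihe, ihf]
  | mu v e ih =>
    simp only [interp, inst]
    congr 1
    rw [ih (k + 1)]
    apply interp_congr
    intro w _
    by_cases hwv : w = v
    · subst hwv; simp [inst]
    · simp only [Function.update_of_ne hwv]
      exact inst_lift u (ρ w) 0 k (Nat.zero_le _)

/-! ### named substitution vs interp -/

def muSet (σ : ℕ → Exp A) (v : ℕ) (e : Exp A) : Finset ℕ :=
  ((Exp.fv e).erase v).biUnion fun w => Exp.fv (σ w)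

def muVar (σ : ℕ → Exp A) (v : ℕ) (e : Exp A) : ℕ :=
  if v ∈ muSet σ v e then Exp.freshVar (muSet σ v e) else v

theorem subst_mu (σ : ℕ → Exp A) (v : ℕ) (e : Exp A) :
    Exp.subst σ (.mu v e) =
      .mu (muVar σ v e) (Exp.subst (Function.update σ v (.var (muVar σ v e))) e) := rfl

theorem freshVar_not_mem (s : Finset ℕ) : Exp.freshVar s ∉ s := by
  intro h
  have h2 : Exp.freshVar s ≤ s.sup id := Finset.le_sup (f := id) h
  unfold Exp.freshVar at h2
  omega

theorem muVar_notMem (σ : ℕ → Exp A) (v : ℕ) (e : Exp A) :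
    muVar σ v e ∉ muSet σ v e := by
  unfold muVar
  split
  · exact freshVar_not_mem _
  · assumption

theorem interp_subst (ρ : ℕ → LN A) (σ : ℕ → Exp A) (e : Exp A) :
    interp ρ (Exp.subst σ e) = interp (fun w => interp ρ (σ w)) e := by
  induction e generalizing ρ σ with
  | zero => rfl
  | var v => rfl
  | act a e ih => simp only [Exp.subst, interp]; rw [ih]
  | plus e f ihe ihf => simp only [Exp.subst, interp]; rw [ihe, ihf]
  | mu v e ih =>
    rw [subst_mu]
    set v' := muVar σ v e with hv'
    simp only [interp]
    congr 1
    rw [ih]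
    apply interp_congr
    intro w hw
    by_cases hwv : w = v
    · subst hwv
      simp [interp]
    · have hσ : Function.update σ v (Exp.var v') w = σ w := Function.update_of_ne hwv _ _
      have hmem : Exp.fv (σ w) ⊆ muSet σ v e := by
        apply Finset.subset_biUnion_of_mem (fun w => Exp.fv (σ w))
        exact Finset.mem_erase.mpr ⟨hwv, hw⟩
      have hv'mem : v' ∉ Exp.fv (σ w) := fun h => muVar_notMem σ v e (hmem h)
      have hupd : ∀ u ∈ Exp.fv (σ w),
          Function.update (fun x => lift 0 1 (ρ x)) v' (LN.bvar 0) u = lift 0 1 (ρ u) := by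
        intro u hu
        have hne : u ≠ v' := by rintro rfl; exact hv'mem hu
        simp [Function.update_of_ne hne]
      simp only [hσ, Function.update_of_ne hwv]
      rw [interp_congr _ _ (σ w) hupd]
      exact interp_lift 0 1 ρ (σ w)

/-! ### destL of interp -/

section Hom
variable [DecidableEq A]

def Good (ρ : ℕ → LN A) : Prop :=
  ∀ w, (∃ x, ρ w = .fvar x) ∨ (∃ k, ρ w = .bvar k)

def hmap (ρ : ℕ → LN A) : ((A × Exp A) ⊕ ℕ) → Finset ((A × LN A) ⊕ ℕ)
  | Sum.inl (a, e') => {Sum.inl (a, interp ρ e')}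
  | Sum.inr w => destL (ρ w)

theorem destL_interp (ρ : ℕ → LN A) (hρ : Good ρ) (e : Exp A) :
    destL (interp ρ e) = (dest e).biUnion (hmap ρ) := by
  induction e generalizing ρ with
  | zero => simp [interp, destL, dest]
  | var v => simp [interp, dest, hmap]
  | act a e ih => simp [interp, destL, dest, hmap]
  | plus e f ihe ihf =>
    simp only [interp, destL, dest]
    rw [ihe ρ hρ, ihf ρ hρ]
    ext x
    simp only [Finset.mem_union, Finset.mem_biUnion]
    constructor
    · rintro (⟨a, ha, hx⟩ | ⟨a, ha, hx⟩)
      · exact ⟨a, Or.inl ha, hx⟩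
      · exact ⟨a, Or.inr ha, hx⟩
    · rintro ⟨a, ha | ha, hx⟩
      · exact Or.inl ⟨a, ha, hx⟩
      · exact Or.inr ⟨a, ha, hx⟩
  | mu v e ih =>
    set ρ₁ : ℕ → LN A := Function.update (fun w => lift 0 1 (ρ w)) v (.bvar 0) with hρ₁
    have hGood₁ : Good ρ₁ := by
      intro w
      by_cases hwv : w = v
      · subst hwv; right; exact ⟨0, by simp [hρ₁]⟩
      · rcases hρ w with ⟨x, hx⟩ | ⟨k, hk⟩
        · left; exact ⟨x, by simp [hρ₁, Function.update_of_ne hwv, hx, lift]⟩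
        · right; exact ⟨k + 1, by simp [hρ₁, Function.update_of_ne hwv, hk, lift]⟩
    have hmu : interp ρ (.mu v e) = .mu (interp ρ₁ e) := rfl
    rw [hmu]
    show (destL (interp ρ₁ e)).biUnion (destStepL (.mu (interp ρ₁ e)))
      = ((dest e).biUnion (destStep v (.mu v e))).biUnion (hmap ρ)
    rw [ih ρ₁ hGood₁, Finset.biUnion_biUnion, Finset.biUnion_biUnion]
    apply Finset.biUnion_congr rfl
    intro y hy
    match y with
    | Sum.inl (a, e') =>
      have hρ₁v : ρ₁ v = .bvar 0 := by rw [hρ₁]; simp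
      have hstar : interp ρ (Exp.subst1 e' v (.mu v e))
          = inst 0 (.mu (interp ρ₁ e)) (interp ρ₁ e') := by
        rw [interp_inst, Exp.subst1, interp_subst]
        apply interp_congr
        intro w _
        by_cases hwv : w = v
        · subst hwv
          rw [Function.update_self, hρ₁v, hmu]
          simp [inst, lift_zero]
        · have h1 : ρ₁ w = lift 0 1 (ρ w) := by
            rw [hρ₁]; exact Function.update_of_ne hwv _ _
          rw [Function.update_of_ne hwv, h1]
          show interp ρ (Exp.var w) = inst 0 (.mu (interp ρ₁ e)) (lift 0 1 (ρ w))
          rw [inst_lift_cancel]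
          rfl
      show (hmap ρ₁ (Sum.inl (a, e'))).biUnion (destStepL (.mu (interp ρ₁ e)))
          = (destStep v (.mu v e) (Sum.inl (a, e'))).biUnion (hmap ρ)
      simp only [hmap, destStep, Finset.singleton_biUnion, destStepL, hstar]
    | Sum.inr w =>
      show (hmap ρ₁ (Sum.inr w)).biUnion (destStepL (.mu (interp ρ₁ e)))
          = (destStep v (.mu v e) (Sum.inr w)).biUnion (hmap ρ)
      by_cases hwv : w = v
      · have hρ₁v : ρ₁ w = .bvar 0 := by rw [hρ₁, hwv]; simp
        simp only [hmap, destStep, if_pos hwv, hρ₁v, destL]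
        simp
      · have h1 : ρ₁ w = lift 0 1 (ρ w) := by
          rw [hρ₁]; exact Function.update_of_ne hwv _ _
        simp only [hmap, destStep, if_neg hwv, Finset.singleton_biUnion, h1]
        rcases hρ w with ⟨x, hx⟩ | ⟨k, hk⟩
        · simp [hx, lift, destL, destStepL, hmap]
        · simp [hk, lift, destL, hmap]

/-- The translation to locally nameless terms. -/
def toLN (e : Exp A) : LN A := interp LN.fvar e

theorem goodFvar : Good (LN.fvar : ℕ → LN A) := fun w => Or.inl ⟨w, rfl⟩

theorem destL_toLN (e : Exp A) :
    destL (toLN e) = (dest e).biUnion (hmap LN.fvar) := destL_interp _ goodFvar e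

theorem mem_inr_toLN (e : Exp A) (w : ℕ) :
    Sum.inr w ∈ destL (toLN e) ↔ Sum.inr w ∈ dest e := by
  rw [destL_toLN, Finset.mem_biUnion]
  constructor
  · rintro ⟨y, hy, hmem⟩
    match y with
    | Sum.inl (a, e') => simp [hmap] at hmem
    | Sum.inr u =>
      simp only [hmap, destL, Finset.mem_singleton, Sum.inr.injEq] at hmem
      subst hmem; exact hy
  · intro hy
    exact ⟨Sum.inr w, hy, by simp [hmap, destL]⟩

theorem mem_inl_toLN (e : Exp A) (a : A) (t : LN A) :
    Sum.inl (a, t) ∈ destL (toLN e) ↔ ∃ e', Sum.inl (a, e') ∈ dest e ∧ t = toLN e' := by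
  rw [destL_toLN, Finset.mem_biUnion]
  constructor
  · rintro ⟨y, hy, hmem⟩
    match y with
    | Sum.inl (b, e') =>
      simp only [hmap, Finset.mem_singleton, Sum.inl.injEq, Prod.mk.injEq] at hmem
      exact ⟨e', hmem.1 ▸ hy, hmem.2⟩
    | Sum.inr u => simp [hmap, destL] at hmem
  · rintro ⟨e', he', rfl⟩
    exact ⟨Sum.inl (a, e'), he', by simp [hmap, toLN]⟩

theorem bisim_of_toLN_eq :
    IsBisim (dest (A := A)) dest (fun x y => toLN x = toLN y) := by
  intro x y hxy
  refine ⟨fun v => ?_, fun a x' hx' => ?_, fun a y' hy' => ?_⟩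
  · rw [← mem_inr_toLN, ← mem_inr_toLN, hxy]
  · have : Sum.inl (a, toLN x') ∈ destL (toLN y) := by
      rw [← hxy, mem_inl_toLN]; exact ⟨x', hx', rfl⟩
    rw [mem_inl_toLN] at this
    obtain ⟨y', hy', heq⟩ := this
    exact ⟨y', hy', heq⟩
  · have : Sum.inl (a, toLN y') ∈ destL (toLN x) := by
      rw [hxy, mem_inl_toLN]; exact ⟨y', hy', rfl⟩
    rw [mem_inl_toLN] at this
    obtain ⟨x', hx', heq⟩ := this
    exact ⟨x', hx', heq.symm⟩

end Hom

end SubstComp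


/-- composition of simultaneous substitutions up to bisimilarity.
Here `σf`, `σg` and `σc` are the simultaneous substitutions `[f̄/v̄]`, `[ḡ/w̄]` and
`[(f₁[ḡ/w̄], …, f_m[ḡ/w̄])/v̄]`, characterised by their action on the (distinct)
variables `v̄` (resp. `w̄`) and by being the identity elsewhere. -/
theorem subst_comp_bisimilar {A : Type*} [DecidableEq A] {m n : ℕ}
    (e : Exp A) (fs : Fin m → Exp A) (gs : Fin n → Exp A)
    (vs : Fin m → ℕ) (ws : Fin n → ℕ)
    (hvs : Function.Injective vs) (hws : Function.Injective ws)
    (he : ↑(Exp.fv e) ⊆ Set.range vs)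
    (hfs : ∀ k : Fin m, ↑(Exp.fv (fs k)) ⊆ Set.range ws)
    (σf σg σc : ℕ → Exp A)
    (hσf : ∀ j, σf (vs j) = fs j) (hσf' : ∀ w, w ∉ Set.range vs → σf w = .var w)
    (hσg : ∀ j, σg (ws j) = gs j) (hσg' : ∀ w, w ∉ Set.range ws → σg w = .var w)
    (hσc : ∀ j, σc (vs j) = Exp.subst σg (fs j))
    (hσc' : ∀ w, w ∉ Set.range vs → σc w = .var w) :
    Bisimilar dest (Exp.subst σg (Exp.subst σf e)) (Exp.subst σc e) := by
  refine ⟨fun x y => SubstComp.toLN x = SubstComp.toLN y, SubstComp.bisim_of_toLN_eq, ?_⟩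
  show SubstComp.interp SubstComp.LN.fvar (Exp.subst σg (Exp.subst σf e))
      = SubstComp.interp SubstComp.LN.fvar (Exp.subst σc e)
  rw [SubstComp.interp_subst, SubstComp.interp_subst, SubstComp.interp_subst]
  apply SubstComp.interp_congr
  intro w hw
  obtain ⟨j, rfl⟩ := he (Finset.mem_coe.mpr hw)
  simp only [hσf j, hσc j]
  rw [SubstComp.interp_subst]
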